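/- Let T₁, …, T_d, X₁, …, X_g be bounded operators on H with each Xⱼ self-adjoint and Σᵢ TᵢTᵢ* + Σⱼ Xⱼ² ≤ I, and suppose there exist operators B₁, …, B_d, not all zero, with Σᵢ Tᵢ Bᵢ* = 0 and Σᵢ BᵢBᵢ* ≤ I. Then the block tuple Sᵢ = [[Tᵢ, 0],[Bᵢ, 0]], Yⱼ = [[Xⱼ, 0],[0, 0]] on H ⊕ H satisfies Σᵢ SᵢSᵢ* + Σⱼ Yⱼ² ≤ I, each Yⱼ is self-adjoint, and the dilation is nontrivial (some Bᵢ ≠ 0). -/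

import Mathlib

open ContinuousLinearMap

variable {H : Type*} [NormedAddCommGroup H] [InnerProductSpace ℂ H]

/-- The block operator `[[A, B], [C, D]]` on the Hilbert space direct sum `H ⊕ H`. -/
noncomputable def blockOp (A B C D : H →L[ℂ] H) :
    WithLp 2 (H × H) →L[ℂ] WithLp 2 (H × H) :=
  ((WithLp.prodContinuousLinearEquiv 2 ℂ H H).symm : H × H →L[ℂ] WithLp 2 (H × H)) ∘L
    ((A ∘L ContinuousLinearMap.fst ℂ H H + B ∘L ContinuousLinearMap.snd ℂ H H).prod
      (C ∘L ContinuousLinearMap.fst ℂ H H + D ∘L ContinuousLinearMap.snd ℂ H H)) ∘L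
    ((WithLp.prodContinuousLinearEquiv 2 ℂ H H : WithLp 2 (H × H) ≃L[ℂ] H × H) :
      WithLp 2 (H × H) →L[ℂ] H × H)

/-! With `Sᵢ = [[Tᵢ, 0], [Bᵢ, 0]]`, the sum `∑ Sᵢ Sᵢ*` is the block operator
`[[∑ Tᵢ Tᵢ*, ∑ Tᵢ Bᵢ*], [∑ Bᵢ Tᵢ*, ∑ Bᵢ Bᵢ*]]`, whose off-diagonal blocks vanish because
`∑ Tᵢ Bᵢ* = 0`. Hence `1 - ∑ Sᵢ Sᵢ* - ∑ Yⱼ²` is block diagonal with the two positive blocks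
`1 - ∑ Tᵢ Tᵢ* - ∑ Xⱼ²` and `1 - ∑ Bᵢ Bᵢ*`. -/

variable {ι : Type*}

lemma WithLp.fst_sum {p : ENNReal} {α β : Type*} [AddCommGroup α] [AddCommGroup β]
    (s : Finset ι) (f : ι → WithLp p (α × β)) : (∑ i ∈ s, f i).fst = ∑ i ∈ s, (f i).fst := by
  rw [← WithLp.ofLp_fst, WithLp.ofLp_sum, Prod.fst_sum]
  rfl

lemma WithLp.snd_sum {p : ENNReal} {α β : Type*} [AddCommGroup α] [AddCommGroup β]
    (s : Finset ι) (f : ι → WithLp p (α × β)) : (∑ i ∈ s, f i).snd = ∑ i ∈ s, (f i).snd := by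
  rw [← WithLp.ofLp_snd, WithLp.ofLp_sum, Prod.snd_sum]
  rfl

section BlockOp

@[simp]
lemma blockOp_fst (A B C D : H →L[ℂ] H) (x : WithLp 2 (H × H)) :
    (blockOp A B C D x).fst = A x.fst + B x.snd := rfl

@[simp]
lemma blockOp_snd (A B C D : H →L[ℂ] H) (x : WithLp 2 (H × H)) :
    (blockOp A B C D x).snd = C x.fst + D x.snd := rfl

lemma withLp_prod_clm_ext {P Q : WithLp 2 (H × H) →L[ℂ] WithLp 2 (H × H)}
    (hfst : ∀ x, (P x).fst = (Q x).fst) (hsnd : ∀ x, (P x).snd = (Q x).snd) : P = Q := by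
  ext x
  exact (WithLp.linearEquiv 2 ℂ (H × H)).injective (Prod.ext (hfst x) (hsnd x))

lemma one_eq_blockOp : (1 : WithLp 2 (H × H) →L[ℂ] WithLp 2 (H × H)) = blockOp 1 0 0 1 :=
  withLp_prod_clm_ext (fun _ ↦ by simp) (fun _ ↦ by simp)

lemma blockOp_add (A B C D A' B' C' D' : H →L[ℂ] H) :
    blockOp A B C D + blockOp A' B' C' D' = blockOp (A + A') (B + B') (C + C') (D + D') :=
  withLp_prod_clm_ext (fun _ ↦ by simp; abel) (fun _ ↦ by simp; abel)

lemma blockOp_sub (A B C D A' B' C' D' : H →L[ℂ] H) :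
    blockOp A B C D - blockOp A' B' C' D' = blockOp (A - A') (B - B') (C - C') (D - D') :=
  withLp_prod_clm_ext (fun _ ↦ by simp; abel) (fun _ ↦ by simp; abel)

lemma blockOp_sum (s : Finset ι) (A B C D : ι → H →L[ℂ] H) :
    ∑ i ∈ s, blockOp (A i) (B i) (C i) (D i) =
      blockOp (∑ i ∈ s, A i) (∑ i ∈ s, B i) (∑ i ∈ s, C i) (∑ i ∈ s, D i) := by
  refine withLp_prod_clm_ext (fun x ↦ ?_) (fun x ↦ ?_)
  · simp [sum_apply, WithLp.fst_sum, Finset.sum_add_distrib]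
  · simp [sum_apply, WithLp.snd_sum, Finset.sum_add_distrib]

lemma blockOp_comp (A B C D A' B' C' D' : H →L[ℂ] H) :
    blockOp A B C D ∘L blockOp A' B' C' D' =
      blockOp (A ∘L A' + B ∘L C') (A ∘L B' + B ∘L D') (C ∘L A' + D ∘L C') (C ∘L B' + D ∘L D') :=
  withLp_prod_clm_ext (fun _ ↦ by simp; abel) (fun _ ↦ by simp; abel)

variable [CompleteSpace H]

lemma adjoint_blockOp (A B C D : H →L[ℂ] H) :
    adjoint (blockOp A B C D) = blockOp (adjoint A) (adjoint C) (adjoint B) (adjoint D) := by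
  refine ((eq_adjoint_iff _ _).mpr fun x y ↦ ?_).symm
  simp only [WithLp.prod_inner_apply, WithLp.ofLp_fst, WithLp.ofLp_snd, blockOp_fst, blockOp_snd,
    inner_add_left, inner_add_right, adjoint_inner_left]
  ring

lemma blockOp_comp_adjoint_of_right_eq_zero (A C : H →L[ℂ] H) :
    blockOp A 0 C 0 ∘L adjoint (blockOp A 0 C 0) =
      blockOp (A ∘L adjoint A) (A ∘L adjoint C) (C ∘L adjoint A) (C ∘L adjoint C) := by
  simp [adjoint_blockOp, blockOp_comp]

lemma isSelfAdjoint_blockOp_diag {A D : H →L[ℂ] H} (hA : IsSelfAdjoint A) (hD : IsSelfAdjoint D) :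
    IsSelfAdjoint (blockOp A 0 0 D) := by
  rw [isSelfAdjoint_iff', adjoint_blockOp, hA.adjoint_eq, hD.adjoint_eq, map_zero]

open scoped ComplexOrder in
lemma isPositive_blockOp_diag {P Q : H →L[ℂ] H} (hP : P.IsPositive) (hQ : Q.IsPositive) :
    (blockOp P 0 0 Q).IsPositive := by
  refine (isPositive_iff' _).mpr
    ⟨isSelfAdjoint_blockOp_diag hP.isSelfAdjoint hQ.isSelfAdjoint, fun x ↦ ?_⟩
  simpa using add_nonneg (hP.inner_nonneg_left x.fst) (hQ.inner_nonneg_left x.snd)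

end BlockOp

/-- Theorem 2.8 ('only if', conditions (2)/(3)): a nontrivial solution of
`∑ Tᵢ Bᵢ* = 0` with `∑ Bᵢ Bᵢ* ≤ I` yields a nontrivial dilation inside `D^{d,g}`. -/
theorem stmt_5 [CompleteSpace H] (d g : ℕ)
    (T : Fin d → H →L[ℂ] H) (X : Fin g → H →L[ℂ] H)
    (hXsa : ∀ j, IsSelfAdjoint (X j))
    (hcontr : (1 - (∑ i, (T i) ∘L adjoint (T i) + ∑ j, (X j) ∘L (X j))).IsPositive)
    (B : Fin d → H →L[ℂ] H) (hBne : ∃ i, B i ≠ 0)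
    (hTB : ∑ i, (T i) ∘L adjoint (B i) = 0)
    (hBB : (1 - ∑ i, (B i) ∘L adjoint (B i)).IsPositive)
    (S : Fin d → WithLp 2 (H × H) →L[ℂ] WithLp 2 (H × H))
    (Y : Fin g → WithLp 2 (H × H) →L[ℂ] WithLp 2 (H × H))
    (hS : ∀ i, S i = blockOp (T i) 0 (B i) 0)
    (hY : ∀ j, Y j = blockOp (X j) 0 0 0) :
    (1 - (∑ i, (S i) ∘L adjoint (S i) + ∑ j, (Y j) ∘L (Y j))).IsPositive ∧
      (∀ j, IsSelfAdjoint (Y j)) ∧ (∃ i, B i ≠ 0) := by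
  have hBT : ∑ i, B i ∘L adjoint (T i) = 0 := by
    simpa [map_sum, adjoint_comp] using congrArg adjoint hTB
  have hblock : 1 - (∑ i, S i ∘L adjoint (S i) + ∑ j, Y j ∘L Y j) =
      blockOp (1 - (∑ i, T i ∘L adjoint (T i) + ∑ j, X j ∘L X j)) 0 0
        (1 - ∑ i, B i ∘L adjoint (B i)) := by
    simp only [hS, hY, blockOp_comp_adjoint_of_right_eq_zero, blockOp_comp, blockOp_sum, hTB, hBT,
      one_eq_blockOp, blockOp_add, blockOp_sub]
    simp
  refine ⟨hblock ▸ isPositive_blockOp_diag hcontr hBB, fun j ↦ ?_, hBne⟩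
  rw [hY]
  exact isSelfAdjoint_blockOp_diag (hXsa j) (.zero _)
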